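/- arXiv:2405.17196 — 2 statements merged into one kernel-verified Lean document; each statement's English description precedes it below -/
import Mathlib

section
/- Let A be a finite product of finite control sets and J : A → ℝ^N. For κ ≥ 0, let Π^f_κ = { π : A → ℝ^N : π_i(a) ≥ 0, Σ_i π_i(a) ≤ κ for all a }. Then V(Π^f_κ) = sup_{π∈Π^f_κ} sup{ (1/N)Σ_i J_i(a*) : a* Nash equilibrium of J+π } is right-continuous in κ: for every κ ≥ 0, lim_{κ' ↓ κ} V(Π^f_{κ'}) = V(Π^f_κ). -/
open scoped BigOperators
open Filter

/-- A pure Nash equilibrium of the `N`-player game with payoffs `G`. -/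
def NashEq {N : ℕ} {A : Fin N → Type*} (G : (∀ i, A i) → Fin N → ℝ) (a : ∀ i, A i) : Prop :=
  ∀ i (b : A i), G (Function.update a i b) i ≤ G a i

/-- `V(π)`: best average (original) payoff over Nash equilibria of `J + π`. -/
noncomputable def Vpi {N : ℕ} {A : Fin N → Type*} (J : (∀ i, A i) → Fin N → ℝ)
    (π : (∀ i, A i) → Fin N → ℝ) : EReal :=
  ⨆ a ∈ {a | NashEq (fun x i => J x i + π x i) a},
    (((1 : ℝ) / N * ∑ i, J a i : ℝ) : EReal)

/-- `V(Π)`: best value over a mechanism scheme. -/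
noncomputable def VScheme {N : ℕ} {A : Fin N → Type*} (J : (∀ i, A i) → Fin N → ℝ)
    (S : Set ((∀ i, A i) → Fin N → ℝ)) : EReal :=
  ⨆ π ∈ S, Vpi J π

/-- The κ-implementation scheme with full information. -/
def PiKappa {N : ℕ} (A : Fin N → Type*) (κ : ℝ) : Set ((∀ i, A i) → Fin N → ℝ) :=
  {π | ∀ a, (∀ i, 0 ≤ π a i) ∧ ∑ i, π a i ≤ κ}

/-- Minimal total payment needed to make `a` a Nash equilibrium. -/
noncomputable def kapAux {N : ℕ} {A : Fin N → Type} [∀ i, Fintype (A i)]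
    (J : (∀ i, A i) → Fin N → ℝ) (a : ∀ i, A i) : ℝ :=
  ∑ i, ((Finset.univ.sup' ⟨a i, Finset.mem_univ _⟩
      fun b => J (Function.update a i b) i) - J a i)

lemma kapAux_le {N : ℕ} {A : Fin N → Type} [∀ i, Fintype (A i)]
    (J : (∀ i, A i) → Fin N → ℝ) {κ' : ℝ} {π : (∀ i, A i) → Fin N → ℝ}
    (hπ : π ∈ PiKappa A κ') {a : ∀ i, A i}
    (ha : NashEq (fun x i => J x i + π x i) a) : kapAux J a ≤ κ' := by
  have h1 : kapAux J a ≤ ∑ i, π a i := by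
    refine Finset.sum_le_sum fun i _ => ?_
    have hsup : (Finset.univ.sup' ⟨a i, Finset.mem_univ _⟩
        fun b => J (Function.update a i b) i) ≤ J a i + π a i := by
      refine Finset.sup'_le _ _ fun b _ => ?_
      have h2 := ha i b
      have h3 := (hπ (Function.update a i b)).1 i
      simp only at h2
      linarith
    linarith
  exact h1.trans (hπ a).2

lemma exists_impl {N : ℕ} {A : Fin N → Type} [∀ i, Fintype (A i)]
    (J : (∀ i, A i) → Fin N → ℝ) {κ : ℝ} (hκ : 0 ≤ κ) {a : ∀ i, A i}
    (hka : kapAux J a ≤ κ) :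
    ∃ π ∈ PiKappa A κ, NashEq (fun x i => J x i + π x i) a := by
  classical
  set s : Fin N → ℝ := fun i => (Finset.univ.sup' ⟨a i, Finset.mem_univ _⟩
      fun b => J (Function.update a i b) i) with hs
  have hsge : ∀ i, J a i ≤ s i := by
    intro i
    have : J (Function.update a i (a i)) i ≤ s i :=
      Finset.le_sup' (fun b => J (Function.update a i b) i) (Finset.mem_univ (a i))
    rwa [Function.update_eq_self] at this
  refine ⟨fun x i => if x = a then s i - J a i else 0, ?_, ?_⟩
  · intro x
    constructor
    · intro i
      by_cases hx : x = a
      · subst hx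
        simp only [if_pos rfl, if_true]
        linarith [hsge i]
      · simp [hx]
    · by_cases hx : x = a
      · subst hx
        simp only [if_pos rfl, if_true]
        exact hka
      · simp only [hx, if_false, Finset.sum_const_zero]
        exact hκ
  · intro i b
    by_cases hb : Function.update a i b = a
    · simp [hb]
    · simp only [hb, if_false, if_pos rfl, if_true]
      have : J (Function.update a i b) i ≤ s i :=
        Finset.le_sup' (fun b => J (Function.update a i b) i) (Finset.mem_univ b)
      linarith

theorem stmt9 {N : ℕ} {A : Fin N → Type} [∀ i, Fintype (A i)]
    (J : (∀ i, A i) → Fin N → ℝ) (κ : ℝ) (hκ : 0 ≤ κ) :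
    Tendsto (fun κ' => VScheme J (PiKappa A κ'))
      (nhdsWithin κ (Set.Ioi κ)) (nhds (VScheme J (PiKappa A κ))) := by
  classical
  -- choose c > κ such that no kapAux value lies in (κ, c)
  set t : Finset (∀ i, A i) := Finset.univ.filter (fun a => κ < kapAux J a) with ht
  set c : ℝ := if h : t.Nonempty then t.inf' h (kapAux J) else κ + 1 with hc
  have hκc : κ < c := by
    rw [hc]
    split_ifs with h
    · refine (Finset.lt_inf'_iff h).2 fun a ha => ?_
      exact (Finset.mem_filter.1 ha).2
    · linarith
  have hcprop : ∀ a : ∀ i, A i, kapAux J a < c → kapAux J a ≤ κ := by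
    intro a hac
    by_contra h
    push_neg at h
    have hat : a ∈ t := Finset.mem_filter.2 ⟨Finset.mem_univ _, h⟩
    have hne : t.Nonempty := ⟨a, hat⟩
    rw [hc, dif_pos hne] at hac
    exact absurd (Finset.inf'_le _ hat) (not_le.2 hac)
  have hev : ∀ᶠ κ' in nhdsWithin κ (Set.Ioi κ),
      VScheme J (PiKappa A κ') = VScheme J (PiKappa A κ) := by
    filter_upwards [Ioo_mem_nhdsGT_of_mem ⟨le_refl κ, hκc⟩] with κ' hκ'
    obtain ⟨hκ'1, hκ'2⟩ := hκ'
    apply le_antisymm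
    · -- VScheme κ' ≤ VScheme κ
      refine iSup₂_le fun π hπ => ?_
      refine iSup₂_le fun a ha => ?_
      have hka : kapAux J a ≤ κ' := kapAux_le J hπ ha
      have hka' : kapAux J a ≤ κ := hcprop a (lt_of_le_of_lt hka hκ'2)
      obtain ⟨π', hπ', ha'⟩ := exists_impl J hκ hka'
      calc (((1 : ℝ) / N * ∑ i, J a i : ℝ) : EReal)
          ≤ Vpi J π' := le_iSup₂ (f := fun a (_ : a ∈ {a | NashEq
              (fun x i => J x i + π' x i) a}) =>
              (((1 : ℝ) / N * ∑ i, J a i : ℝ) : EReal)) a ha'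
        _ ≤ VScheme J (PiKappa A κ) := le_iSup₂ (f := fun π (_ : π ∈ PiKappa A κ) =>
              Vpi J π) π' hπ'
    · -- monotone
      refine iSup₂_le fun π hπ => ?_
      have hmem : π ∈ PiKappa A κ' := fun a => ⟨(hπ a).1, (hπ a).2.trans hκ'1.le⟩
      exact le_iSup₂ (f := fun π (_ : π ∈ PiKappa A κ') => Vpi J π) π hmem
  exact Tendsto.congr' (by filter_upwards [hev] with x hx using hx.symm) tendsto_const_nhds
end

section
/- Let A be a finite product of control sets, J : A → ℝ^N, and suppose π^f : A → ℝ_+^N is a nonnegative mechanism and a* is a Nash equilibrium of J + π^f. Define the J-invariant mechanism π^p : A → ℝ^N by π^p(a) = π^f(a*) if J(a) = J(a*) and π^p(a) = 0 otherwise. Then a* is a Nash equilibrium of J + π^p. -/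
open scoped Classical

theorem stmt11 {N : ℕ} {A : Fin N → Type*} [∀ i, Fintype (A i)]
    (J : (∀ i, A i) → Fin N → ℝ)
    (πf : (∀ i, A i) → Fin N → ℝ) (hπf : ∀ a i, 0 ≤ πf a i)
    (astar : ∀ i, A i)
    (hNE : NashEq (fun a i => J a i + πf a i) astar) :
    NashEq (fun a i => J a i +
      (if J a = J astar then πf astar else 0) i) astar := by
  intro i b
  simp only [if_pos rfl, if_true, eq_self_iff_true]
  by_cases h : J (Function.update astar i b) = J astar
  · simp only [if_pos h]
    have := congrFun h i
    linarith
  · simp only [if_neg h, Pi.zero_apply, add_zero]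
    have h1 := hNE i b
    have h2 := hπf (Function.update astar i b) i
    simp only at h1
    linarith
end
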